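/- Fix k ≥ 1 and let G be the graph of the Boolean-width separation construction. Then there exists an enumeration of V(G) of width at most 2k + 1; in particular, the linear rank-width of G, and hence its rank-width, is at most 2k + 1. -/

import Mathlib

/-- `𝒮 = {s ⊆ [2k] : |s ∩ [k]| = 1}`. -/
abbrev SS (k : ℕ) : Finset (Finset ℕ) :=
  (Finset.Icc 1 (2 * k)).powerset.filter fun s => (s ∩ Finset.Icc 1 k).card = 1

/-- The powerset of `[2k]`. -/
abbrev PP (k : ℕ) : Finset (Finset ℕ) := (Finset.Icc 1 (2 * k)).powerset

/-- Vertices of the Boolean-width separation construction: `a_s` for `s ∈ 𝒮` and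
`b^j_t` for `j ∈ [k²]`, `t ⊆ [2k]`. -/
abbrev BWVertex (k : ℕ) : Type := ↥(SS k) ⊕ (Fin (k * k) × ↥(PP k))

/-- The adjacency-generating relation of the construction: each class
`{a_s : s ∩ [k] = {i}}` is a clique, each `B_j = {b^j_t : t ⊆ [2k]}` is a clique, and
`a_s ∼ b^j_t` iff `|s ∩ t|` is odd. -/
def bwRel (k : ℕ) : BWVertex k → BWVertex k → Prop
  | Sum.inl s, Sum.inl s' => s.val ∩ Finset.Icc 1 k = s'.val ∩ Finset.Icc 1 k
  | Sum.inr (j, _), Sum.inr (j', _) => j = j'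
  | Sum.inl s, Sum.inr (_, t) => Odd (s.val ∩ t.val).card
  | _, _ => False

/-- The graph of the Boolean-width separation construction. -/
def BWGraph (k : ℕ) : SimpleGraph (BWVertex k) := SimpleGraph.fromRel (bwRel k)

open scoped Classical in
/-- The cut-rank of the cut `(X, V ∖ X)` in a finite simple graph `G`: the `𝔽₂`-rank of
the 0-1 matrix with rows indexed by `X`, columns by its complement, and entry `(x,y)`
equal to `1` iff `xy ∈ E(G)`. -/
noncomputable def cutRank {V : Type*} [Fintype V] [DecidableEq V]
    (G : SimpleGraph V) (X : Finset V) : ℕ :=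
  (Matrix.of fun (x : ↥X) (y : ↥(Xᶜ)) =>
    if G.Adj x.val y.val then (1 : ZMod 2) else 0).rank

/-- The prefix `{v_1, …, v_p}` of the enumeration `e` of the vertices. -/
def enumPrefix {V : Type*} [Fintype V] [DecidableEq V]
    (e : Fin (Fintype.card V) ≃ V) (p : ℕ) : Finset V :=
  (Finset.univ.filter fun i : Fin (Fintype.card V) => (i : ℕ) < p).image e

namespace BWAux

/-- The sorting key: `a`-vertices first, ordered by class then by name;
then `b`-vertices ordered by clique index then by name. -/
def key (k : ℕ) : BWVertex k → ℕ ×ₗ (ℕ ×ₗ ℕ)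
  | Sum.inl s => toLex (0, toLex (Encodable.encode (s.val ∩ Finset.Icc 1 k), Encodable.encode s.val))
  | Sum.inr (j, t) => toLex (1, toLex (j.val, Encodable.encode t.val))

lemma key_inj (k : ℕ) : Function.Injective (key k) := by
  rintro (s | ⟨j, t⟩) (s' | ⟨j', t'⟩) h <;>
    simp only [key, toLex_inj, Prod.mk.injEq] at h
  · exact congrArg Sum.inl (Subtype.ext (Encodable.encode_injective h.2.2))
  · exact absurd h.1 (by norm_num)
  · exact absurd h.1 (by norm_num)
  · exact congrArg Sum.inr (Prod.ext (Fin.ext h.2.1) (Subtype.ext (Encodable.encode_injective h.2.2)))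

lemma mem_SS_subset {k : ℕ} (s : ↥(SS k)) : s.val ⊆ Finset.Icc 1 (2 * k) := by
  have := s.2
  rw [Finset.mem_filter, Finset.mem_powerset] at this
  exact this.1

lemma mem_PP_subset {k : ℕ} (t : ↥(PP k)) : t.val ⊆ Finset.Icc 1 (2 * k) := by
  have := t.2
  rwa [Finset.mem_powerset] at this

lemma zmod2_cast (n : ℕ) : ((n : ZMod 2)) = if Odd n then 1 else 0 := by
  rw [← ZMod.natCast_mod n 2]
  rcases Nat.even_or_odd n with h | h
  · rw [if_neg (by simpa using h), Nat.even_iff.mp h, Nat.cast_zero]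
  · rw [if_pos h, Nat.odd_iff.mp h, Nat.cast_one]

lemma sum_ind (k : ℕ) (u : Finset ℕ) (hu : u ⊆ Finset.Icc 1 (2 * k)) :
    ∑ m : Fin (2 * k), (if ((m : ℕ) + 1) ∈ u then (1 : ZMod 2) else 0) = (u.card : ZMod 2) := by
  rw [Finset.sum_boole]
  congr 1
  refine Finset.card_bij (fun m _ => (m : ℕ) + 1) ?_ ?_ ?_
  · intro a ha
    exact (Finset.mem_filter.mp ha).2
  · intro a _ b _ h
    have h' : (a : ℕ) + 1 = (b : ℕ) + 1 := h
    exact Fin.ext (by omega)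
  · intro b hb
    have hb2 := Finset.mem_Icc.mp (hu hb)
    refine ⟨⟨b - 1, by omega⟩, Finset.mem_filter.mpr ⟨Finset.mem_univ _, ?_⟩, ?_⟩
    · show b - 1 + 1 ∈ u
      rwa [Nat.sub_add_cancel hb2.1]
    · show b - 1 + 1 = b
      omega

open Finset in
lemma cutRank_le (k : ℕ) (X : Finset (BWVertex k))
    (hcross : ∀ x ∈ X, ∀ y ∉ X, key k x < key k y) :
    cutRank (BWGraph k) X ≤ 2 * k + 1 := by
  classical
  -- consequences of the prefix property
  have hAA : ∀ (s s' : ↥(SS k)), Sum.inl s ∈ X → (Sum.inl s' : BWVertex k) ∉ X →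
      Encodable.encode (s.val ∩ Finset.Icc 1 k) ≤ Encodable.encode (s'.val ∩ Finset.Icc 1 k) := by
    intro s s' h h'
    have h2 := hcross _ h _ h'
    rw [key, key, Prod.Lex.lt_iff] at h2
    rcases h2 with h2 | ⟨-, h2⟩
    · simp only [ofLex_toLex] at h2 <;> omega
    · rw [Prod.Lex.lt_iff] at h2
      rcases h2 with h2 | ⟨h2, -⟩
      · exact le_of_lt h2
      · exact le_of_eq h2
  have hBB : ∀ (j j' : Fin (k * k)) (t t' : ↥(PP k)),
      (Sum.inr (j, t) : BWVertex k) ∈ X → (Sum.inr (j', t') : BWVertex k) ∉ X →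
      (j : ℕ) ≤ (j' : ℕ) := by
    intro j j' t t' h h'
    have h2 := hcross _ h _ h'
    rw [key, key, Prod.Lex.lt_iff] at h2
    rcases h2 with h2 | ⟨-, h2⟩
    · simp only [ofLex_toLex] at h2 <;> omega
    · rw [Prod.Lex.lt_iff] at h2
      rcases h2 with h2 | ⟨h2, -⟩
      · exact le_of_lt h2
      · exact le_of_eq h2
  have hfact : Fact (Nat.Prime 2) := ⟨Nat.prime_two⟩
  by_cases hb : ∃ jt : Fin (k * k) × ↥(PP k), Sum.inr jt ∈ X
  · -- all a-vertices are in X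
    have hAllA : ∀ s : ↥(SS k), (Sum.inl s : BWVertex k) ∈ X := by
      intro s
      by_contra hs
      obtain ⟨jt, hjt⟩ := hb
      have h2 := hcross _ hjt _ hs
      obtain ⟨j, t⟩ := jt
      rw [key, key, Prod.Lex.lt_iff] at h2
      rcases h2 with h2 | ⟨h2, -⟩ <;> simp only [ofLex_toLex] at h2 <;> omega
    set P : Matrix ↥X (Fin (2 * k) ⊕ Unit) (ZMod 2) := Matrix.of fun x i =>
      match x.1, i with
      | Sum.inl s, Sum.inl m => if ((m : ℕ) + 1) ∈ s.val then 1 else 0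
      | Sum.inl _, Sum.inr _ => 0
      | Sum.inr _, Sum.inl _ => 0
      | Sum.inr (j, _), Sum.inr _ =>
          if (∃ u : ↥(PP k), (Sum.inr (j, u) : BWVertex k) ∉ X) then 1 else 0
      with hP
    set Q : Matrix (Fin (2 * k) ⊕ Unit) ↥(Xᶜ) (ZMod 2) := Matrix.of fun i y =>
      match i, y.1 with
      | Sum.inl m, Sum.inr (_, t') => if ((m : ℕ) + 1) ∈ t'.val then 1 else 0
      | Sum.inl _, Sum.inl _ => 0
      | Sum.inr _, Sum.inr (j', _) =>
          if (∃ u : ↥(PP k), (Sum.inr (j', u) : BWVertex k) ∈ X) then 1 else 0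
      | Sum.inr _, Sum.inl _ => 0
      with hQ
    have hM : cutRank (BWGraph k) X = (P * Q).rank := by
      unfold cutRank
      congr 1
      ext x y
      obtain ⟨x, hx⟩ := x
      obtain ⟨y, hy⟩ := y
      rw [Finset.mem_compl] at hy
      rw [Matrix.mul_apply, Fintype.sum_sum_type]
      obtain (s' | ⟨j', t'⟩) := y
      · exact absurd (hAllA s') hy
      obtain (s | ⟨j, t⟩) := x
      · -- a-row, b-column
        simp only [Matrix.of_apply, hP, hQ, Finset.sum_const, Fintype.univ_punit,
          Finset.card_singleton, one_smul, mul_zero, zero_mul, add_zero]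
        rw [show ((BWGraph k).Adj (Sum.inl s) (Sum.inr (j', t')) ↔ Odd (s.val ∩ t'.val).card) by
          simp [BWGraph, SimpleGraph.fromRel_adj, bwRel]]
        have : ∀ m : Fin (2 * k),
            (if ((m : ℕ) + 1) ∈ s.val then (1 : ZMod 2) else 0) *
              (if ((m : ℕ) + 1) ∈ t'.val then (1 : ZMod 2) else 0) =
            (if ((m : ℕ) + 1) ∈ s.val ∩ t'.val then (1 : ZMod 2) else 0) := by
          intro m
          by_cases h1 : ((m : ℕ) + 1) ∈ s.val <;> by_cases h2 : ((m : ℕ) + 1) ∈ t'.val <;>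
            simp [h1, h2, Finset.mem_inter]
        rw [Finset.sum_congr rfl fun m _ => this m,
          sum_ind k _ ((Finset.inter_subset_left).trans (mem_SS_subset s)),
          zmod2_cast]
        split_ifs <;> rfl
      · -- b-row, b-column
        simp only [Matrix.of_apply, hP, hQ, mul_zero, zero_mul, Finset.sum_const_zero,
          Fintype.univ_punit, Finset.sum_const, Finset.card_singleton, one_smul, zero_add]
        rw [show ((BWGraph k).Adj (Sum.inr (j, t)) (Sum.inr (j', t')) ↔
            (Sum.inr (j, t) : BWVertex k) ≠ Sum.inr (j', t') ∧ j = j') by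
          simp [BWGraph, SimpleGraph.fromRel_adj, bwRel, eq_comm, and_comm]]
        by_cases hjj : j = j'
        · subst hjj
          rw [if_pos ⟨fun h => hy (h ▸ hx), rfl⟩, if_pos ⟨t', hy⟩, if_pos ⟨t, hx⟩, one_mul]
        · rw [if_neg (fun h => hjj h.2)]
          by_cases h2 : (∃ u : ↥(PP k), (Sum.inr (j', u) : BWVertex k) ∈ X)
          · obtain ⟨u', hu'⟩ := h2
            have hno : ¬(∃ u : ↥(PP k), (Sum.inr (j, u) : BWVertex k) ∉ X) := by
              rintro ⟨u, hu⟩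
              exact hjj (Fin.ext (le_antisymm (hBB j j' t t' hx hy) (hBB j' j u' u hu' hu)))
            rw [if_neg hno, zero_mul]
          · rw [if_neg h2, mul_zero]
    rw [hM]
    calc (P * Q).rank ≤ P.rank := Matrix.rank_mul_le_left P Q
      _ ≤ Fintype.card (Fin (2 * k) ⊕ Unit) := Matrix.rank_le_card_width P
      _ = 2 * k + 1 := by simp
  · -- X consists only of a-vertices
    push_neg at hb
    set P : Matrix ↥X (Fin (2 * k) ⊕ Unit) (ZMod 2) := Matrix.of fun x i =>
      match x.1, i with
      | Sum.inl s, Sum.inl m => if ((m : ℕ) + 1) ∈ s.val then 1 else 0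
      | Sum.inl s, Sum.inr _ =>
          if (∃ u : ↥(SS k), u.val ∩ Finset.Icc 1 k = s.val ∩ Finset.Icc 1 k ∧
              (Sum.inl u : BWVertex k) ∉ X) then 1 else 0
      | Sum.inr _, _ => 0
      with hP
    set Q : Matrix (Fin (2 * k) ⊕ Unit) ↥(Xᶜ) (ZMod 2) := Matrix.of fun i y =>
      match i, y.1 with
      | Sum.inl m, Sum.inr (_, t') => if ((m : ℕ) + 1) ∈ t'.val then 1 else 0
      | Sum.inl _, Sum.inl _ => 0
      | Sum.inr _, Sum.inl s' =>
          if (∃ u : ↥(SS k), u.val ∩ Finset.Icc 1 k = s'.val ∩ Finset.Icc 1 k ∧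
              (Sum.inl u : BWVertex k) ∈ X) then 1 else 0
      | Sum.inr _, Sum.inr _ => 0
      with hQ
    have hM : cutRank (BWGraph k) X = (P * Q).rank := by
      unfold cutRank
      congr 1
      ext x y
      obtain ⟨x, hx⟩ := x
      obtain ⟨y, hy⟩ := y
      rw [Finset.mem_compl] at hy
      rw [Matrix.mul_apply, Fintype.sum_sum_type]
      obtain (s | ⟨j, t⟩) := x
      swap
      · exact absurd hx (hb (j, t))
      obtain (s' | ⟨j', t'⟩) := y
      · -- a-row, a-column
        simp only [Matrix.of_apply, hP, hQ, mul_zero, zero_mul, Finset.sum_const_zero,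
          Fintype.univ_punit, Finset.sum_const, Finset.card_singleton, one_smul, zero_add]
        rw [show ((BWGraph k).Adj (Sum.inl s) (Sum.inl s') ↔
            (Sum.inl s : BWVertex k) ≠ Sum.inl s' ∧
              s.val ∩ Finset.Icc 1 k = s'.val ∩ Finset.Icc 1 k) by
          simp [BWGraph, SimpleGraph.fromRel_adj, bwRel, eq_comm, and_comm]]
        by_cases hcls : s.val ∩ Finset.Icc 1 k = s'.val ∩ Finset.Icc 1 k
        · rw [if_pos ⟨fun h => hy (h ▸ hx), hcls⟩, if_pos ⟨s', hcls.symm, hy⟩,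
            if_pos ⟨s, hcls, hx⟩, one_mul]
        · rw [if_neg (fun h => hcls h.2)]
          by_cases h2 : (∃ u : ↥(SS k), u.val ∩ Finset.Icc 1 k = s'.val ∩ Finset.Icc 1 k ∧
              (Sum.inl u : BWVertex k) ∈ X)
          · obtain ⟨u', hu'1, hu'2⟩ := h2
            have hno : ¬(∃ u : ↥(SS k), u.val ∩ Finset.Icc 1 k = s.val ∩ Finset.Icc 1 k ∧
                (Sum.inl u : BWVertex k) ∉ X) := by
              rintro ⟨u, hu1, hu2⟩
              refine hcls ?_
              have e1 := hAA s s' hx hy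
              have e2 := hAA u' u hu'2 hu2
              rw [hu'1, hu1] at e2
              exact Encodable.encode_injective (le_antisymm e1 e2)
            rw [if_neg hno, zero_mul]
          · rw [if_neg h2, mul_zero]
      · -- a-row, b-column
        simp only [Matrix.of_apply, hP, hQ, Finset.sum_const, Fintype.univ_punit,
          Finset.card_singleton, one_smul, mul_zero, zero_mul, add_zero]
        rw [show ((BWGraph k).Adj (Sum.inl s) (Sum.inr (j', t')) ↔ Odd (s.val ∩ t'.val).card) by
          simp [BWGraph, SimpleGraph.fromRel_adj, bwRel]]
        have : ∀ m : Fin (2 * k),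
            (if ((m : ℕ) + 1) ∈ s.val then (1 : ZMod 2) else 0) *
              (if ((m : ℕ) + 1) ∈ t'.val then (1 : ZMod 2) else 0) =
            (if ((m : ℕ) + 1) ∈ s.val ∩ t'.val then (1 : ZMod 2) else 0) := by
          intro m
          by_cases h1 : ((m : ℕ) + 1) ∈ s.val <;> by_cases h2 : ((m : ℕ) + 1) ∈ t'.val <;>
            simp [h1, h2, Finset.mem_inter]
        rw [Finset.sum_congr rfl fun m _ => this m,
          sum_ind k _ ((Finset.inter_subset_left).trans (mem_SS_subset s)),
          zmod2_cast]
        split_ifs <;> rfl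
    rw [hM]
    calc (P * Q).rank ≤ P.rank := Matrix.rank_mul_le_left P Q
      _ ≤ Fintype.card (Fin (2 * k) ⊕ Unit) := Matrix.rank_le_card_width P
      _ = 2 * k + 1 := by simp

end BWAux

/-- the graph of the Boolean-width separation construction admits an
enumeration of its vertices all of whose prefix cuts have `𝔽₂`-rank at most `2k + 1`;
in particular its linear rank-width, and hence its rank-width, is at most `2k + 1`. -/
theorem BWGraph_linear_rankwidth (k : ℕ) (hk : 1 ≤ k) :
    ∃ e : Fin (Fintype.card (BWVertex k)) ≃ BWVertex k,
      ∀ p : ℕ, cutRank (BWGraph k) (enumPrefix e p) ≤ 2 * k + 1 := by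
  letI L : LinearOrder (BWVertex k) := LinearOrder.lift' (BWAux.key k) (BWAux.key_inj k)
  let e := monoEquivOfFin (BWVertex k) rfl
  refine ⟨e.toEquiv, fun p => ?_⟩
  apply BWAux.cutRank_le k
  intro x hx y hy
  simp only [enumPrefix, Finset.mem_image, Finset.mem_filter, Finset.mem_univ, true_and] at hx hy
  obtain ⟨i, hi, rfl⟩ := hx
  by_contra hlt
  have hle : BWAux.key k y ≤ BWAux.key k (e.toEquiv i) := not_lt.1 hlt
  set j := e.toEquiv.symm y with hj
  have hey : e.toEquiv j = y := e.toEquiv.apply_symm_apply y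
  have hple : p ≤ (j : ℕ) := not_lt.1 fun hc => hy ⟨j, hc, hey⟩
  have hij : i < j := show (i : ℕ) < (j : ℕ) from lt_of_lt_of_le hi hple
  have hkey : BWAux.key k (e.toEquiv i) ≤ BWAux.key k (e.toEquiv j) := e.map_rel_iff.2 hij.le
  rw [hey] at hkey
  have heq : e.toEquiv i = y := BWAux.key_inj k (le_antisymm hkey hle)
  have hji : j = i := by rw [hj, ← heq, Equiv.symm_apply_apply]
  exact absurd hij (by rw [hji]; exact lt_irrefl i)
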